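/- Let a group G act on a compact metric space K by homeomorphisms, and suppose the action is Lyapunov stable. Then for all x, y ∈ K the following are equivalent: (1) φ(x) = φ(y) for every continuous function φ ∈ C(K)_π (i.e., every continuous function constant on all orbits); (2) the orbit closures coincide: closure(O(x)) = closure(O(y)). -/

import Mathlib

/-!
An invariant continuous function is constant on each orbit closure. Conversely, if
`q ∉ closure (G • p)`, the function `z ↦ sup_g dist(g • z, G • p)` is invariant, vanishes at `p`
and is positive at `q`. Lyapunov stability says that the maps `g • ·` are uniformly
equicontinuous, hence so are the maps `z ↦ dist(g • z, G • p)`, and a bounded supremum of a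
uniformly equicontinuous family is continuous.
-/

open Metric MulAction Set Pointwise

theorem UniformContinuous.comp_uniformEquicontinuous {ι α β γ : Type*} [UniformSpace α]
    [UniformSpace β] [UniformSpace γ] {φ : α → γ} (hφ : UniformContinuous φ)
    {F : ι → β → α} (hF : UniformEquicontinuous F) : UniformEquicontinuous fun i => φ ∘ F i :=
  fun _ hU => hF _ (hφ hU)

theorem ciSup_le_ciSup_add {ι : Type*} [Nonempty ι] {f g : ι → ℝ} {c : ℝ}
    (hg : BddAbove (range g)) (h : ∀ i, f i ≤ g i + c) : ⨆ i, f i ≤ (⨆ i, g i) + c :=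
  ciSup_le fun i => (h i).trans (add_le_add_left (le_ciSup hg i) c)

theorem UniformEquicontinuous.uniformContinuous_iSup {ι X : Type*} [Nonempty ι]
    [PseudoMetricSpace X] {f : ι → X → ℝ} (hf : UniformEquicontinuous f)
    (hbdd : ∀ x, BddAbove (range fun i => f i x)) : UniformContinuous fun x => ⨆ i, f i x := by
  rw [Metric.uniformContinuous_iff]
  intro ε hε
  obtain ⟨δ, hδ, hfδ⟩ := Metric.uniformEquicontinuous_iff.mp hf (ε / 2) (half_pos hε)
  have key : ∀ x y, dist x y < δ → ⨆ i, f i x ≤ (⨆ i, f i y) + ε / 2 := fun x y hxy =>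
    ciSup_le_ciSup_add (hbdd y) fun i => by
      have := hfδ x y hxy i
      rw [Real.dist_eq, abs_sub_lt_iff] at this
      linarith
  refine ⟨δ, hδ, fun {x y} hxy => ?_⟩
  have h₁ := key x y hxy
  have h₂ := key y x (dist_comm x y ▸ hxy)
  rw [Real.dist_eq, abs_sub_lt_iff]
  constructor <;> linarith

section OrbitSupInfDist

variable (G : Type*) {K : Type*} [Group G] [PseudoMetricSpace K] [MulAction G K]

noncomputable def orbitSupInfDist (S : Set K) (z : K) : ℝ :=
  ⨆ g : G, infDist (g • z) S

variable {G}

theorem orbitSupInfDist_smul (S : Set K) (h : G) (z : K) :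
    orbitSupInfDist G S (h • z) = orbitSupInfDist G S z := by
  simp only [orbitSupInfDist, smul_smul]
  exact (Equiv.mulRight h).iSup_comp (g := fun g => infDist (g • z) S)

theorem orbitSupInfDist_eq_zero {S : Set K} {p : K} (hp : ∀ g : G, g • p ∈ S) :
    orbitSupInfDist G S p = 0 := by
  simp [orbitSupInfDist, infDist_zero_of_mem (hp _)]

variable [CompactSpace K]

theorem bddAbove_range_infDist_smul (S : Set K) (z : K) :
    BddAbove (range fun g : G => infDist (g • z) S) :=
  (isCompact_range (continuous_infDist_pt S)).bddAbove.mono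
    (range_comp_subset_range (· • z) (infDist · S))

theorem infDist_le_orbitSupInfDist (S : Set K) (z : K) :
    infDist z S ≤ orbitSupInfDist G S z := by
  unfold orbitSupInfDist
  simpa only [one_smul] using le_ciSup (bddAbove_range_infDist_smul (G := G) S z) 1

theorem uniformContinuous_orbitSupInfDist
    (hG : UniformEquicontinuous fun g : G => (g • · : K → K)) (S : Set K) :
    UniformContinuous (orbitSupInfDist G S) :=
  ((uniformContinuous_infDist_pt S).comp_uniformEquicontinuous hG).uniformContinuous_iSup
    (bddAbove_range_infDist_smul S)

end OrbitSupInfDist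

theorem closure_orbit_subset_of_mem_closure {M K : Type*} [Monoid M] [TopologicalSpace K]
    [MulAction M K] [ContinuousConstSMul M K] {p q : K} (h : q ∈ closure (orbit M p)) :
    closure (orbit M q) ⊆ closure (orbit M p) :=
  closure_minimal (by rintro _ ⟨g, rfl⟩; exact smul_closure_orbit_subset g p (smul_mem_smul_set h))
    isClosed_closure

theorem eq_of_mem_closure_orbit {M K Y : Type*} [Monoid M] [TopologicalSpace K] [MulAction M K]
    [TopologicalSpace Y] [T2Space Y] {φ : K → Y} (hφ : Continuous φ)
    (hinv : ∀ (g : M) (z : K), φ (g • z) = φ z) {x y : K} (hy : y ∈ closure (orbit M x)) :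
    φ y = φ x :=
  closure_minimal (by rintro _ ⟨g, rfl⟩; exact hinv g x) (isClosed_eq hφ continuous_const) hy

theorem exists_invariant_continuous_ne_of_notMem_closure_orbit {G K : Type*} [Group G]
    [PseudoMetricSpace K] [CompactSpace K] [MulAction G K]
    (hG : UniformEquicontinuous fun g : G => (g • · : K → K)) {p q : K}
    (hq : q ∉ closure (orbit G p)) :
    ∃ φ : C(K, ℝ), (∀ (g : G) (z : K), φ (g • z) = φ z) ∧ φ p ≠ φ q := by
  refine ⟨⟨orbitSupInfDist G (orbit G p), (uniformContinuous_orbitSupInfDist hG _).continuous⟩,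
    orbitSupInfDist_smul _, ?_⟩
  have hp : orbitSupInfDist G (orbit G p) p = 0 := orbitSupInfDist_eq_zero (mem_orbit p)
  have hq : 0 < orbitSupInfDist G (orbit G p) q :=
    ((infDist_pos_iff_notMem_closure ⟨p, mem_orbit_self p⟩).mp hq).trans_le
      (infDist_le_orbitSupInfDist _ q)
  exact (hp ▸ hq).ne

/-- Let a group `G` act by homeomorphisms on a compact metric space `K`, with the
action Lyapunov stable. Then two points `x, y ∈ K` are not separated by the invariant
continuous functions (those in `C(K)_π`, i.e. constant on orbits) if and only if their
orbit closures coincide. -/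
theorem lyapunov_stable_invariant_functions_separate_orbit_closures
    {G K : Type*} [Group G] [MetricSpace K] [CompactSpace K] [MulAction G K]
    [ContinuousConstSMul G K]
    (hLS : ∀ ε > (0 : ℝ), ∃ δ > (0 : ℝ),
      ∀ (g : G) (x y : K), dist x y < δ → dist (g • x) (g • y) < ε)
    (x y : K) :
    (∀ φ : C(K, ℝ), (∀ (g : G) (z : K), φ (g • z) = φ z) → φ x = φ y) ↔
    closure (MulAction.orbit G x) = closure (MulAction.orbit G y) := by
  have hG : UniformEquicontinuous fun g : G => (g • · : K → K) :=
    Metric.uniformEquicontinuous_iff.mpr fun ε hε =>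
      (hLS ε hε).imp fun _ ⟨hδ, h⟩ => ⟨hδ, fun x y hxy g => h g x y hxy⟩
  have mem_closure_orbit {p q : K}
      (h : ∀ φ : C(K, ℝ), (∀ (g : G) (z : K), φ (g • z) = φ z) → φ p = φ q) :
      q ∈ closure (orbit G p) := by
    by_contra hq
    obtain ⟨φ, hinv, hne⟩ := exists_invariant_continuous_ne_of_notMem_closure_orbit hG hq
    exact hne (h φ hinv)
  constructor
  · intro h
    exact subset_antisymm
      (closure_orbit_subset_of_mem_closure (mem_closure_orbit fun φ hφ => (h φ hφ).symm))
      (closure_orbit_subset_of_mem_closure (mem_closure_orbit h))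
  · intro h φ hinv
    exact (eq_of_mem_closure_orbit φ.continuous hinv (h ▸ subset_closure (mem_orbit_self y))).symm
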